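/- Large-bandwidth first iterate under a power-law singularity: let g : (0,∞) → [0,∞) satisfy g(r) = C r^{-β}(1 + o(1)) as r ↓ 0 with C > 0, β > 0. Let x₁,…,x_n ∈ ℝ^d with x_j ≠ x_i for j ≠ i, and define W_{ij}(h) = g(‖x_i − x_j‖²/h²) and the exclude-self iterate x̃_i^{(1)}(h) = (Σ_{j≠i} W_{ij}(h) x_j)/(Σ_{j≠i} W_{ij}(h)). Then with p = 2β, lim_{h→∞} x̃_i^{(1)}(h) = (Σ_{j≠i} ‖x_i − x_j‖^{-p} x_j)/(Σ_{j≠i} ‖x_i − x_j‖^{-p}). -/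

import Mathlib

/-!
Dividing every weight `g(‖x_i - x_j‖² / h²)` by the common factor `C h^{2β}` does not change the
weighted mean, and by the power law each rescaled weight tends to `‖x_i - x_j‖^{-2β}` as `h → ∞`,
because `‖x_i - x_j‖² / h² ↓ 0`. The weighted mean is continuous in the weights wherever their
sum is nonzero, and here the limiting weights are positive.
-/

open Filter Set Topology

section WeightedMean

variable {ι E : Type*} [AddCommMonoid E] [Module ℝ E]

noncomputable def weightedMean (s : Finset ι) (w : ι → ℝ) (v : ι → E) : E :=
  (∑ j ∈ s, w j)⁻¹ • ∑ j ∈ s, w j • v j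

theorem weightedMean_mul_left (s : Finset ι) (w : ι → ℝ) (v : ι → E) {c : ℝ} (hc : c ≠ 0) :
    weightedMean s (fun j => c * w j) v = weightedMean s w v := by
  simp only [weightedMean, ← Finset.mul_sum, mul_smul, ← Finset.smul_sum, mul_inv, mul_comm c⁻¹,
    inv_smul_smul₀ hc]

theorem Filter.Tendsto.weightedMean [TopologicalSpace E] [ContinuousAdd E] [ContinuousSMul ℝ E]
    {α : Type*} {l : Filter α} {s : Finset ι} {W : α → ι → ℝ} {w : ι → ℝ}
    (hW : ∀ j ∈ s, Tendsto (fun a => W a j) l (𝓝 (w j))) (hw : ∑ j ∈ s, w j ≠ 0) (v : ι → E) :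
    Tendsto (fun a => _root_.weightedMean s (W a) v) l (𝓝 (_root_.weightedMean s w v)) :=
  ((tendsto_finsetSum s hW).inv₀ hw).smul
    (tendsto_finsetSum s fun j hj => (hW j hj).smul tendsto_const_nhds)

end WeightedMean

theorem tendsto_sq_div_sq_atTop_nhdsGT_zero {a : ℝ} (ha : a ≠ 0) :
    Tendsto (fun h : ℝ => a ^ 2 / h ^ 2) atTop (𝓝[>] 0) := by
  refine tendsto_nhdsWithin_of_tendsto_nhds_of_eventually_within _
    (tendsto_const_nhds.div_atTop (tendsto_pow_atTop (n := 2) two_ne_zero)) ?_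
  filter_upwards [eventually_gt_atTop (0 : ℝ)] with h hh
  exact mem_Ioi.2 (by positivity)

theorem rpow_sq_div_sq_neg {a h : ℝ} (ha : 0 ≤ a) (hh : 0 ≤ h) (β : ℝ) :
    (a ^ 2 / h ^ 2) ^ (-β) = a ^ (-(2 * β)) * h ^ (2 * β) := by
  rw [Real.div_rpow (by positivity) (by positivity), ← Real.rpow_natCast a 2,
    ← Real.rpow_natCast h 2, ← Real.rpow_mul ha, ← Real.rpow_mul hh, div_eq_mul_inv,
    ← Real.rpow_neg hh]
  norm_num

theorem tendsto_powerLaw_div_rpow {g : ℝ → ℝ} {C β : ℝ}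
    (hpow : Tendsto (fun r => g r / (C * r ^ (-β))) (𝓝[>] 0) (𝓝 1)) {a : ℝ} (ha : 0 < a) :
    Tendsto (fun h : ℝ => g (a ^ 2 / h ^ 2) / (C * h ^ (2 * β))) atTop
      (𝓝 (a ^ (-(2 * β)))) := by
  have hlim := (hpow.comp (tendsto_sq_div_sq_atTop_nhdsGT_zero ha.ne')).mul_const (a ^ (-(2 * β)))
  rw [one_mul] at hlim
  refine hlim.congr' ?_
  filter_upwards [eventually_gt_atTop 0] with h hh
  have ha' : a ^ (-(2 * β)) ≠ 0 := (Real.rpow_pos_of_pos ha _).ne'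
  simp only [Function.comp_apply, rpow_sq_div_sq_neg ha.le hh.le]
  rw [mul_comm (a ^ _), ← mul_assoc, div_mul_eq_div_div, div_mul_cancel₀ _ ha']

theorem stmt7_general {d n : ℕ} (x : Fin n → EuclideanSpace ℝ (Fin d)) (i : Fin n)
    (hx : ∀ j : Fin n, j ≠ i → x j ≠ x i)
    (g : ℝ → ℝ)
    (C β : ℝ) (hC : 0 < C)
    (hpow : Tendsto (fun r : ℝ => g r / (C * r ^ (-β)))
      (nhdsWithin 0 (Set.Ioi 0)) (nhds 1)) :
    Tendsto (fun h : ℝ =>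
        (∑ j ∈ Finset.univ.erase i, g (‖x i - x j‖ ^ 2 / h ^ 2))⁻¹ •
          ∑ j ∈ Finset.univ.erase i, g (‖x i - x j‖ ^ 2 / h ^ 2) • x j)
      atTop
      (nhds ((∑ j ∈ Finset.univ.erase i, ‖x i - x j‖ ^ (-(2 * β)))⁻¹ •
        ∑ j ∈ Finset.univ.erase i, (‖x i - x j‖ ^ (-(2 * β))) • x j)) := by
  set s := Finset.univ.erase i
  rcases s.eq_empty_or_nonempty with hs | hs
  · simp [hs]
  have hdist : ∀ j ∈ s, 0 < ‖x i - x j‖ := fun j hj =>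
    norm_pos_iff.2 (sub_ne_zero.2 (hx j (Finset.ne_of_mem_erase hj)).symm)
  have hlim := Tendsto.weightedMean
    (W := fun h j => g (‖x i - x j‖ ^ 2 / h ^ 2) / (C * h ^ (2 * β)))
    (fun j hj => tendsto_powerLaw_div_rpow hpow (hdist j hj))
    (Finset.sum_pos (fun j hj => Real.rpow_pos_of_pos (hdist j hj) _) hs).ne' x
  refine hlim.congr' ?_
  filter_upwards [eventually_gt_atTop 0] with h hh
  have hscale : C * h ^ (2 * β) ≠ 0 := by positivity
  rw [← weightedMean_mul_left _ _ _ hscale]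
  simp only [mul_div_cancel₀ _ hscale, weightedMean]

/-- large-bandwidth first (exclude-self) mean-shift iterate under a
power-law singularity `g(r) = C r^{-β}(1+o(1))` as `r ↓ 0` converges, as `h → ∞`, to
the inverse-distance (exponent `p = 2β`) weighted local mean. -/
theorem stmt7 {d n : ℕ} (x : Fin n → EuclideanSpace ℝ (Fin d)) (i : Fin n)
    (hx : ∀ j : Fin n, j ≠ i → x j ≠ x i)
    (g : ℝ → ℝ) (hg : ∀ r : ℝ, 0 < r → 0 ≤ g r)
    (C β : ℝ) (hC : 0 < C) (hβ : 0 < β)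
    (hpow : Tendsto (fun r : ℝ => g r / (C * r ^ (-β)))
      (nhdsWithin 0 (Set.Ioi 0)) (nhds 1)) :
    Tendsto (fun h : ℝ =>
        (∑ j ∈ Finset.univ.erase i, g (‖x i - x j‖ ^ 2 / h ^ 2))⁻¹ •
          ∑ j ∈ Finset.univ.erase i, g (‖x i - x j‖ ^ 2 / h ^ 2) • x j)
      atTop
      (nhds ((∑ j ∈ Finset.univ.erase i, ‖x i - x j‖ ^ (-(2 * β)))⁻¹ •
        ∑ j ∈ Finset.univ.erase i, (‖x i - x j‖ ^ (-(2 * β))) • x j)) :=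
  stmt7_general x i hx g C β hC hpow
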